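/- arXiv:2204.10278 — 2 statements merged into one kernel-verified Lean document; each statement's English description precedes it below -/
import Mathlib

section
/- Let α, β be generic length vectors on {1,…,m}. The genetic code G(β) covers G(α) in the genetic order (i.e., G(α) ≺ G(β) and no genetic code lies strictly between them) if and only if S_m(β) = S_m(α) ∪ {J} for exactly one subset J ⊆ {1,…,m} not in S_m(α). -/
/-
For positive monotone length vectors the genetic order is inclusion of the families `S_m`: every
short set is dominated by a gene, and domination preserves shortness. So `G(β)` covers `G(α)`
exactly when `S_m(α) ⋖ S_m(β)`, provided that whenever `S_m(β) \ S_m(α)` contains two sets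
`K₁ ≠ K₂` some generic `γ` lies strictly between. To find it, consider the strictly increasing
positive vectors keeping the `α`-short sets short and the `β`-long sets long: an open convex set
containing perturbations of `α` and `β`, on which the margin of `K₁` changes sign. At a zero of
that margin a small step along a coordinate in the symmetric difference of `K₁` and `K₂` gives the
two margins opposite signs, and a further small step along the generic `α` makes the point generic.
-/
open Finset

def IsGeneric {m : ℕ} (α : Fin m → ℝ) : Prop :=
  ∀ ε : Fin m → ℝ, (∀ i, ε i = 1 ∨ ε i = -1) → ∑ i, ε i * α i ≠ 0

def IsShort {m : ℕ} (α : Fin m → ℝ) (I : Finset (Fin m)) : Prop :=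
  ∑ i ∈ I, α i < ∑ j ∈ Iᶜ, α j

def Dominates {m : ℕ} (I J : Finset (Fin m)) : Prop :=
  ∃ f : {x // x ∈ I} → {x // x ∈ J}, StrictMono f ∧
    ∀ i : {x // x ∈ I}, (i : Fin m) ≤ (f i : Fin m)

def Sm {m : ℕ} (α : Fin (m + 1) → ℝ) : Set (Finset (Fin (m + 1))) :=
  {I | Fin.last m ∈ I ∧ IsShort α I}

def Gcode {m : ℕ} (α : Fin (m + 1) → ℝ) : Set (Finset (Fin (m + 1))) :=
  {I | I ∈ Sm α ∧ ∀ J ∈ Sm α, Dominates I J → I = J}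

/-- The genetic order on genetic codes: every gene of the first is dominated by a gene
of the second. -/
def GLe {m : ℕ} (α β : Fin (m + 1) → ℝ) : Prop :=
  ∀ A ∈ Gcode α, ∃ B ∈ Gcode β, Dominates A B

/-- `G(β)` covers `G(α)`: `G(α) ≺ G(β)` and no genetic code of a generic length vector
lies strictly between. -/
def GCovers {m : ℕ} (α β : Fin (m + 1) → ℝ) : Prop :=
  GLe α β ∧ ¬ GLe β α ∧
    ¬ ∃ γ : Fin (m + 1) → ℝ, (∀ i, 0 < γ i) ∧ Monotone γ ∧ IsGeneric γ ∧
        (GLe α γ ∧ ¬ GLe γ α) ∧ (GLe γ β ∧ ¬ GLe β γ)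

section Dominance

variable {n : ℕ}

lemma dominates_refl (I : Finset (Fin n)) : Dominates I I :=
  ⟨id, strictMono_id, fun _ => le_rfl⟩

lemma Dominates.trans {I J K : Finset (Fin n)} (hIJ : Dominates I J) (hJK : Dominates J K) :
    Dominates I K := by
  obtain ⟨f, hf, hfle⟩ := hIJ
  obtain ⟨g, hg, hgle⟩ := hJK
  exact ⟨g ∘ f, hg.comp hf, fun i => (hfle i).trans (hgle (f i))⟩

lemma sum_comp_le_sum_of_injective {M : Type*} [AddCommMonoid M] [PartialOrder M]
    [IsOrderedAddMonoid M] {I J : Finset (Fin n)} {f : I → J} (hf : Function.Injective f)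
    {w : Fin n → M} (hw : ∀ j, 0 ≤ w j) : ∑ x, w (f x) ≤ ∑ j ∈ J, w j := by
  rw [← Finset.sum_coe_sort J]
  calc ∑ x, w (f x) = ∑ y ∈ Finset.univ.map ⟨f, hf⟩, w y := by
        rw [Finset.sum_map]; rfl
    _ ≤ _ := Finset.sum_le_sum_of_subset_of_nonneg (Finset.subset_univ _) fun j _ _ => hw j

lemma Dominates.sum_le {M : Type*} [AddCommMonoid M] [PartialOrder M] [IsOrderedAddMonoid M]
    {I J : Finset (Fin n)} (h : Dominates I J) {w : Fin n → M} (hw : Monotone w)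
    (hw0 : ∀ j, 0 ≤ w j) : ∑ i ∈ I, w i ≤ ∑ j ∈ J, w j := by
  obtain ⟨f, hf, hfle⟩ := h
  calc ∑ i ∈ I, w i = ∑ x : I, w x := (Finset.sum_coe_sort I w).symm
    _ ≤ ∑ x : I, w (f x) := Finset.sum_le_sum fun x _ => hw (hfle x)
    _ ≤ ∑ j ∈ J, w j := sum_comp_le_sum_of_injective hf.injective hw0

def weight (I : Finset (Fin n)) : ℕ := ∑ i ∈ I, ((i : ℕ) + 1)

lemma Dominates.weight_lt {I J : Finset (Fin n)} (h : Dominates I J) (hne : I ≠ J) :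
    weight I < weight J := by
  obtain ⟨f, hf, hfle⟩ := h
  by_cases hfix : ∀ x, (f x : Fin n) = x
  · have hIJ : I ⊆ J := fun i hi => by simpa [hfix] using (f ⟨i, hi⟩).2
    obtain ⟨j, hjJ, hjI⟩ := (Finset.ssubset_iff_of_subset hIJ).mp (hIJ.ssubset_of_ne hne)
    exact Finset.sum_lt_sum_of_subset hIJ hjJ hjI (Nat.succ_pos _) fun _ _ _ => Nat.zero_le _
  · push Not at hfix
    obtain ⟨x, hx⟩ := hfix
    calc weight I = ∑ x : I, (((x : Fin n) : ℕ) + 1) :=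
          (Finset.sum_coe_sort I fun i : Fin n => (i : ℕ) + 1).symm
      _ < ∑ x : I, (((f x : Fin n) : ℕ) + 1) :=
        Finset.sum_lt_sum (fun y _ => by have := hfle y; omega)
          ⟨x, Finset.mem_univ _, by have := lt_of_le_of_ne (hfle x) hx.symm; omega⟩
      _ ≤ weight J := sum_comp_le_sum_of_injective (w := fun i : Fin n => (i : ℕ) + 1)
          hf.injective fun _ => Nat.zero_le _

end Dominance

lemma IsShort.of_dominates {n : ℕ} {γ : Fin n → ℝ} (hγ0 : ∀ i, 0 ≤ γ i) (hγ : Monotone γ)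
    {I J : Finset (Fin n)} (hJ : IsShort γ J) (h : Dominates I J) : IsShort γ I := by
  have hle := h.sum_le hγ hγ0
  have hI := Finset.sum_add_sum_compl I γ
  have hJ' := Finset.sum_add_sum_compl J γ
  unfold IsShort at hJ ⊢
  linarith

section GeneticCode

variable {m : ℕ}

-- Domination strictly increases `weight`, so a dominator of maximal weight is a gene.
lemma exists_mem_gcode_dominates (γ : Fin (m + 1) → ℝ) {A : Finset (Fin (m + 1))}
    (hA : A ∈ Sm γ) : ∃ B ∈ Gcode γ, Dominates A B := by
  obtain ⟨B, ⟨hB, hAB⟩, hBmax⟩ := Set.exists_max_image {C | C ∈ Sm γ ∧ Dominates A C} weight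
    (Set.toFinite _) ⟨A, hA, dominates_refl A⟩
  refine ⟨B, ⟨hB, fun C hC hBC => ?_⟩, hAB⟩
  by_contra hne
  exact (hBC.weight_lt hne).not_ge (hBmax C ⟨hC, hAB.trans hBC⟩)

lemma gLe_iff_Sm_subset {α β : Fin (m + 1) → ℝ} (hposβ : ∀ i, 0 < β i) (hmonoβ : Monotone β) :
    GLe α β ↔ Sm α ⊆ Sm β := by
  constructor
  · intro h I hI
    obtain ⟨A, hA, hIA⟩ := exists_mem_gcode_dominates α hI
    obtain ⟨B, hB, hAB⟩ := h A hA
    exact ⟨hI.1, hB.1.2.of_dominates (fun i => (hposβ i).le) hmonoβ (hIA.trans hAB)⟩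
  · intro h A hA
    exact exists_mem_gcode_dominates β (h hA.1)

end GeneticCode

section Margin

variable {n : ℕ}

def margin (K : Finset (Fin n)) : (Fin n → ℝ) →ₗ[ℝ] ℝ where
  toFun x := ∑ i ∈ Kᶜ, x i - ∑ i ∈ K, x i
  map_add' x y := by simp only [Pi.add_apply, Finset.sum_add_distrib]; ring
  map_smul' c x := by
    simp only [Pi.smul_apply, smul_eq_mul, ← Finset.mul_sum, RingHom.id_apply, mul_sub]

lemma margin_apply (K : Finset (Fin n)) (x : Fin n → ℝ) :
    margin K x = ∑ i ∈ Kᶜ, x i - ∑ i ∈ K, x i := rfl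

lemma isShort_iff_margin_pos {x : Fin n → ℝ} {K : Finset (Fin n)} :
    IsShort x K ↔ 0 < margin K x := by
  rw [margin_apply, sub_pos, IsShort]

lemma margin_eq_sum_sign (K : Finset (Fin n)) (x : Fin n → ℝ) :
    margin K x = ∑ i, (if i ∈ K then -1 else 1) * x i := by
  have hK : ∑ i ∈ K, (if i ∈ K then -1 else 1) * x i = -∑ i ∈ K, x i := by
    rw [← Finset.sum_neg_distrib]
    exact Finset.sum_congr rfl fun i hi => by simp [hi]
  have hKc : ∑ i ∈ Kᶜ, (if i ∈ K then -1 else 1) * x i = ∑ i ∈ Kᶜ, x i :=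
    Finset.sum_congr rfl fun i hi => by simp [Finset.mem_compl.mp hi]
  rw [margin_apply, ← Finset.sum_add_sum_compl K, hK, hKc]
  ring

lemma isGeneric_iff_forall_margin_ne_zero {x : Fin n → ℝ} :
    IsGeneric x ↔ ∀ K, margin K x ≠ 0 := by
  constructor
  · intro h K
    rw [margin_eq_sum_sign]
    exact h _ fun i => by by_cases hi : i ∈ K <;> simp [hi]
  · intro h ε hε
    convert h (Finset.univ.filter fun i => ε i = -1) using 1
    rw [margin_eq_sum_sign]
    refine Finset.sum_congr rfl fun i _ => ?_
    rcases hε i with hi | hi <;> norm_num [hi]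

lemma margin_single (K : Finset (Fin n)) (i : Fin n) :
    margin K (Pi.single i 1) = if i ∈ K then -1 else 1 := by
  rw [margin_eq_sum_sign, Finset.sum_eq_single i (fun j _ hj => by simp [hj]) (by simp)]
  simp

lemma exists_margin_pos_margin_neg {K₁ K₂ : Finset (Fin n)} (hne : K₁ ≠ K₂) :
    ∃ d, 0 < margin K₁ d ∧ margin K₂ d < 0 := by
  obtain ⟨i, hi⟩ : ∃ i, ¬(i ∈ K₁ ↔ i ∈ K₂) := by
    by_contra! h
    exact hne (Finset.ext h)
  by_cases hi₁ : i ∈ K₁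
  · have hi₂ : i ∉ K₂ := fun h => hi ⟨fun _ => h, fun _ => hi₁⟩
    exact ⟨-Pi.single i 1, by simp [margin_single, hi₁, hi₂]⟩
  · have hi₂ : i ∈ K₂ := by
      by_contra h
      exact hi ⟨fun h' => absurd h' hi₁, fun h' => absurd h' h⟩
    exact ⟨Pi.single i 1, by simp [margin_single, hi₁, hi₂]⟩

end Margin

open Filter Topology

section Perturbation

variable {E : Type*} [AddCommGroup E] [Module ℝ E] [TopologicalSpace E] [ContinuousAdd E]
  [ContinuousSMul ℝ E]

lemma eventually_add_smul_mem {U : Set E} (hU : IsOpen U) {x : E} (hx : x ∈ U) (u : E) :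
    ∀ᶠ t in 𝓝 (0 : ℝ), x + t • u ∈ U := by
  have : Tendsto (fun t : ℝ => x + t • u) (𝓝 0) (𝓝 x) := by
    simpa using tendsto_const_nhds.add ((tendsto_id (x := 𝓝 (0 : ℝ))).smul_const u)
  exact this.eventually (hU.mem_nhds hx)

lemma exists_mem_mul_neg {T : Set E} (hT : IsOpen T) (hTc : IsPreconnected T)
    {f g : E →ₗ[ℝ] ℝ} (hf : Continuous f) {p q : E} (hp : p ∈ T) (hq : q ∈ T)
    (hfp : f p ≤ 0) (hfq : 0 ≤ f q) {d : E} (hfd : 0 < f d) (hgd : g d < 0) :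
    ∃ s ∈ T, f s * g s < 0 := by
  obtain ⟨r, hrT, hr⟩ : ∃ r ∈ T, f r = 0 :=
    hTc.intermediate_value hp hq hf.continuousOn ⟨hfp, hfq⟩
  have hev := eventually_add_smul_mem hT hrT d
  have hfg : ∀ t : ℝ, f (r + t • d) * g (r + t • d) = t * f d * (g r + t * g d) := fun t => by
    simp only [map_add, map_smul, smul_eq_mul, hr, zero_add]
  rcases le_or_gt (g r) 0 with hgr | hgr
  · obtain ⟨t, htT, ht⟩ :=
      ((hev.filter_mono nhdsWithin_le_nhds).and (self_mem_nhdsWithin (s := Set.Ioi 0))).exists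
    refine ⟨_, htT, ?_⟩
    rw [hfg]
    exact mul_neg_of_pos_of_neg (mul_pos ht hfd) (by nlinarith [mul_neg_of_pos_of_neg ht hgd])
  · obtain ⟨t, htT, ht⟩ :=
      ((hev.filter_mono nhdsWithin_le_nhds).and (self_mem_nhdsWithin (s := Set.Iio 0))).exists
    refine ⟨_, htT, ?_⟩
    rw [hfg]
    exact mul_neg_of_neg_of_pos (mul_neg_of_neg_of_pos ht hfd)
      (by nlinarith [mul_pos_of_neg_of_neg ht hgd])

end Perturbation

lemma exists_isGeneric_mem {n : ℕ} {α : Fin n → ℝ} (hα : IsGeneric α) {W : Set (Fin n → ℝ)}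
    (hW : IsOpen W) {s : Fin n → ℝ} (hs : s ∈ W) : ∃ γ ∈ W, IsGeneric γ := by
  have hmargin : ∀ K, ∀ᶠ t in 𝓝[≠] (0 : ℝ), margin K (s + t • α) ≠ 0 := by
    intro K
    have hK := isGeneric_iff_forall_margin_ne_zero.mp hα K
    filter_upwards [nhdsNE_le_cofinite (0 : ℝ) (eventually_cofinite_ne (-margin K s / margin K α))]
      with t ht
    rw [map_add, map_smul, smul_eq_mul]
    contrapose! ht
    field_simp
    linarith
  obtain ⟨t, htW, ht⟩ :=
    ((eventually_add_smul_mem hW hs α).filter_mono nhdsWithin_le_nhds |>.and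
      (eventually_all.mpr hmargin)).exists
  exact ⟨_, htW, isGeneric_iff_forall_margin_ne_zero.mpr ht⟩

section Chamber

variable {n : ℕ}

def signRegion (A B : Set (Finset (Fin n))) : Set (Fin n → ℝ) :=
  {γ | (∀ i, 0 < γ i) ∧ (∀ K ∈ A, 0 < margin K γ) ∧ ∀ K ∈ B, margin K γ < 0}

def chamber (A B : Set (Finset (Fin n))) : Set (Fin n → ℝ) :=
  {γ | StrictMono γ} ∩ signRegion A B

lemma continuous_margin (K : Finset (Fin n)) : Continuous (margin K) :=
  LinearMap.continuous_of_finiteDimensional _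

lemma isOpen_signRegion (A B : Set (Finset (Fin n))) : IsOpen (signRegion A B) := by
  simp only [signRegion, Set.ofPred_and, Set.ofPred_forall]
  refine .inter (isOpen_iInter_of_finite fun i => isOpen_lt continuous_const (continuous_apply i))
    (.inter (isOpen_iInter_of_finite fun K => isOpen_iInter_of_finite fun _ =>
      isOpen_lt continuous_const (continuous_margin K))
    (isOpen_iInter_of_finite fun K => isOpen_iInter_of_finite fun _ =>
      isOpen_lt (continuous_margin K) continuous_const))

lemma isOpen_chamber (A B : Set (Finset (Fin n))) : IsOpen (chamber A B) := by
  have hstrict : {γ : Fin n → ℝ | StrictMono γ} = ⋂ i, ⋂ j, ⋂ (_ : i < j), {γ | γ i < γ j} := by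
    ext γ; simp [StrictMono]
  refine .inter ?_ (isOpen_signRegion A B)
  rw [hstrict]
  exact isOpen_iInter_of_finite fun i => isOpen_iInter_of_finite fun j =>
    isOpen_iInter_of_finite fun _ => isOpen_lt (continuous_apply i) (continuous_apply j)

lemma convex_chamber (A B : Set (Finset (Fin n))) : Convex ℝ (chamber A B) := by
  rintro x ⟨hxmono, hxpos, hxA, hxB⟩ y ⟨hymono, hypos, hyA, hyB⟩ a b ha hb hab
  refine ⟨fun i j hij => ?_, fun i => ?_, fun K hK => ?_, fun K hK => ?_⟩
  · have := convex_Ioi (0 : ℝ) (sub_pos.mpr (hxmono hij)) (sub_pos.mpr (hymono hij)) ha hb hab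
    simp only [Pi.add_apply, Pi.smul_apply, smul_eq_mul, Set.mem_Ioi] at this ⊢
    linarith
  · exact convex_Ioi (0 : ℝ) (hxpos i) (hypos i) ha hb hab
  · simpa using convex_Ioi (0 : ℝ) (hxA K hK) (hyA K hK) ha hb hab
  · simpa using convex_Iio (0 : ℝ) (hxB K hK) (hyB K hK) ha hb hab

lemma chamber_mono {A A' B B' : Set (Finset (Fin n))} (hA : A ⊆ A') (hB : B ⊆ B') :
    chamber A' B' ⊆ chamber A B :=
  fun _ ⟨hmono, hpos, hA', hB'⟩ =>
    ⟨hmono, hpos, fun K hK => hA' K (hA hK), fun K hK => hB' K (hB hK)⟩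

/-- Adding a small multiple of `i ↦ i` makes a monotone vector strictly monotone. -/
lemma chamber_nonempty {A B : Set (Finset (Fin n))} {x : Fin n → ℝ} (hmono : Monotone x)
    (hx : x ∈ signRegion A B) : (chamber A B).Nonempty := by
  obtain ⟨t, hxt, ht⟩ :=
    ((eventually_add_smul_mem (isOpen_signRegion A B) hx fun i => (i : ℝ)).filter_mono
      nhdsWithin_le_nhds |>.and (self_mem_nhdsWithin (s := Set.Ioi 0))).exists
  refine ⟨_, hmono.add_strictMono fun i j hij => ?_, hxt⟩
  simp only [Pi.smul_apply, smul_eq_mul]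
  exact mul_lt_mul_of_pos_left (by exact_mod_cast hij) ht

end Chamber

section Covering

variable {m : ℕ}

lemma margin_neg_of_notMem_Sm {x : Fin (m + 1) → ℝ} (hgen : IsGeneric x)
    {K : Finset (Fin (m + 1))} (hK : Fin.last m ∈ K) (hKx : K ∉ Sm x) : margin K x < 0 :=
  lt_of_le_of_ne (not_lt.mp fun h => hKx ⟨hK, isShort_iff_margin_pos.mpr h⟩)
    (isGeneric_iff_forall_margin_ne_zero.mp hgen K)

def longSets (β : Fin (m + 1) → ℝ) : Set (Finset (Fin (m + 1))) :=
  {K | Fin.last m ∈ K ∧ K ∉ Sm β}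

lemma ssubset_Sm_of_mem_chamber {α β γ : Fin (m + 1) → ℝ}
    (hγ : γ ∈ chamber (Sm α) (longSets β)) {J J' : Finset (Fin (m + 1))}
    (hJ : J ∈ Sm β \ Sm α) (hJ' : J' ∈ Sm β) (hJγ : 0 < margin J γ) (hJ'γ : margin J' γ < 0) :
    Sm α ⊂ Sm γ ∧ Sm γ ⊂ Sm β := by
  obtain ⟨-, -, hA, hB⟩ := hγ
  have hαγ : Sm α ⊆ Sm γ := fun K hK => ⟨hK.1, isShort_iff_margin_pos.mpr (hA K hK)⟩
  have hγβ : Sm γ ⊆ Sm β := fun K hK => by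
    by_contra hKβ
    exact (isShort_iff_margin_pos.mp hK.2).not_gt (hB K ⟨hK.1, hKβ⟩)
  refine ⟨(Set.ssubset_iff_of_subset hαγ).mpr ⟨J, ⟨hJ.1.1, ?_⟩, hJ.2⟩,
    (Set.ssubset_iff_of_subset hγβ).mpr ⟨J', hJ', fun h => ?_⟩⟩
  · exact isShort_iff_margin_pos.mpr hJγ
  · exact (isShort_iff_margin_pos.mp h.2).not_gt hJ'γ

lemma exists_Sm_between {α β : Fin (m + 1) → ℝ}
    (hposα : ∀ i, 0 < α i) (hmonoα : Monotone α) (hgenα : IsGeneric α)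
    (hposβ : ∀ i, 0 < β i) (hmonoβ : Monotone β) (hgenβ : IsGeneric β)
    (hsub : Sm α ⊆ Sm β) {K₁ K₂ : Finset (Fin (m + 1))}
    (hK₁ : K₁ ∈ Sm β \ Sm α) (hK₂ : K₂ ∈ Sm β \ Sm α) (hne : K₁ ≠ K₂) :
    ∃ γ : Fin (m + 1) → ℝ, (∀ i, 0 < γ i) ∧ Monotone γ ∧ IsGeneric γ ∧
      Sm α ⊂ Sm γ ∧ Sm γ ⊂ Sm β := by
  have hα : α ∈ signRegion (Sm α) (insert K₁ (longSets β)) := by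
    refine ⟨hposα, fun K hK => isShort_iff_margin_pos.mp hK.2, ?_⟩
    rintro K (rfl | ⟨hK, hKβ⟩)
    · exact margin_neg_of_notMem_Sm hgenα hK₁.1.1 hK₁.2
    · exact margin_neg_of_notMem_Sm hgenα hK fun h => hKβ (hsub h)
  have hβ : β ∈ signRegion (insert K₁ (Sm α)) (longSets β) := by
    refine ⟨hposβ, ?_, fun K hK => margin_neg_of_notMem_Sm hgenβ hK.1 hK.2⟩
    rintro K (rfl | hK)
    · exact isShort_iff_margin_pos.mp hK₁.1.2
    · exact isShort_iff_margin_pos.mp (hsub hK).2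
  obtain ⟨p, hp⟩ := chamber_nonempty hmonoα hα
  obtain ⟨q, hq⟩ := chamber_nonempty hmonoβ hβ
  obtain ⟨d, hd₁, hd₂⟩ := exists_margin_pos_margin_neg hne
  obtain ⟨s, hsT, hs⟩ := exists_mem_mul_neg (isOpen_chamber _ _) (convex_chamber _ _).isPreconnected
    (continuous_margin K₁) (chamber_mono le_rfl (Set.subset_insert _ _) hp)
    (chamber_mono (Set.subset_insert _ _) le_rfl hq) (hp.2.2.2 K₁ (Set.mem_insert _ _)).le
    (hq.2.2.1 K₁ (Set.mem_insert _ _)).le hd₁ hd₂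
  obtain ⟨γ, ⟨hγT, hγ⟩, hγgen⟩ := exists_isGeneric_mem hgenα
    ((isOpen_chamber _ _).inter (isOpen_lt
      ((continuous_margin K₁).mul (continuous_margin K₂)) continuous_const)) ⟨hsT, hs⟩
  refine ⟨γ, hγT.2.1, hγT.1.monotone, hγgen, ?_⟩
  rcases mul_neg_iff.mp (show margin K₁ γ * margin K₂ γ < 0 from hγ) with ⟨h₁, h₂⟩ | ⟨h₁, h₂⟩
  · exact ssubset_Sm_of_mem_chamber hγT hK₁ hK₂.1 h₁ h₂
  · exact ssubset_Sm_of_mem_chamber hγT hK₂ hK₁.1 h₂ h₁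

end Covering

lemma Sm_ssubset_iff {m : ℕ} {α β : Fin (m + 1) → ℝ} (hposα : ∀ i, 0 < α i)
    (hmonoα : Monotone α) (hposβ : ∀ i, 0 < β i) (hmonoβ : Monotone β) :
    Sm α ⊂ Sm β ↔ GLe α β ∧ ¬ GLe β α := by
  rw [gLe_iff_Sm_subset hposβ hmonoβ, gLe_iff_Sm_subset hposα hmonoα]
  rfl

lemma gCovers_iff_covBy {m : ℕ} {α β : Fin (m + 1) → ℝ}
    (hposα : ∀ i, 0 < α i) (hmonoα : Monotone α) (hgenα : IsGeneric α)
    (hposβ : ∀ i, 0 < β i) (hmonoβ : Monotone β) (hgenβ : IsGeneric β) :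
    GCovers α β ↔ Sm α ⋖ Sm β := by
  rw [GCovers, ← and_assoc, ← Sm_ssubset_iff hposα hmonoα hposβ hmonoβ]
  refine and_congr_right fun hαβ => ⟨fun hno C hαC hCβ => ?_, ?_⟩
  · obtain ⟨J, hJC, hJα⟩ := Set.exists_of_ssubset hαC
    obtain ⟨J', hJ'β, hJ'C⟩ := Set.exists_of_ssubset hCβ
    obtain ⟨γ, hposγ, hmonoγ, hgenγ, hαγ, hγβ⟩ :=
      exists_Sm_between hposα hmonoα hgenα hposβ hmonoβ hgenβ hαβ.subset
        ⟨hCβ.subset hJC, hJα⟩ ⟨hJ'β, fun h => hJ'C (hαC.subset h)⟩ fun h => hJ'C (h ▸ hJC)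
    exact hno ⟨γ, hposγ, hmonoγ, hgenγ, (Sm_ssubset_iff hposα hmonoα hposγ hmonoγ).mp hαγ,
      (Sm_ssubset_iff hposγ hmonoγ hposβ hmonoβ).mp hγβ⟩
  · rintro hcov ⟨γ, hposγ, hmonoγ, -, hαγ, hγβ⟩
    exact hcov ((Sm_ssubset_iff hposα hmonoα hposγ hmonoγ).mpr hαγ)
      ((Sm_ssubset_iff hposγ hmonoγ hposβ hmonoβ).mpr hγβ)

theorem stmt7 {m : ℕ} (α β : Fin (m + 1) → ℝ)
    (hposα : ∀ i, 0 < α i) (hmonoα : Monotone α) (hgenα : IsGeneric α)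
    (hposβ : ∀ i, 0 < β i) (hmonoβ : Monotone β) (hgenβ : IsGeneric β) :
    GCovers α β ↔
      ∃! J : Finset (Fin (m + 1)), J ∉ Sm α ∧ Sm β = insert J (Sm α) := by
  rw [gCovers_iff_covBy hposα hmonoα hgenα hposβ hmonoβ hgenβ, Set.covBy_iff_exists_insert]
  constructor
  · rintro ⟨J, hJ, h⟩
    exact ⟨J, ⟨hJ, h.symm⟩, fun J' ⟨hJ', h'⟩ => (Set.insert_inj hJ').mp (h'.symm.trans h.symm)⟩
  · rintro ⟨J, ⟨hJ, h⟩, -⟩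
    exact ⟨J, hJ, h.symm⟩
end

section
/- There is no generic length vector α = (α₁ ≤ ⋯ ≤ α₉) of 9 positive reals whose genetic code is ⟨{2,4,6,9}⟩; that is, there is no generic α such that the maximal α-short subsets of {1,…,9} containing 9 are exactly {{2,4,6,9}}. -/
open Finset

def mu (J : Finset (Fin 9)) : ℕ := ∑ i ∈ J, (i.val + 1)

lemma dom_refl (I : Finset (Fin 9)) : Dominates I I :=
  ⟨id, strictMono_id, fun _ => le_rfl⟩

lemma dom_trans {I J K : Finset (Fin 9)} (h1 : Dominates I J) (h2 : Dominates J K) :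
    Dominates I K := by
  obtain ⟨f, hf, hfle⟩ := h1
  obtain ⟨g, hg, hgle⟩ := h2
  exact ⟨g ∘ f, hg.comp hf, fun i => le_trans (hfle i) (hgle (f i))⟩

lemma dom_card {I J : Finset (Fin 9)} (h : Dominates I J) : I.card ≤ J.card := by
  obtain ⟨f, hf, _⟩ := h
  have h2 := Fintype.card_le_of_injective f hf.injective
  simpa using h2

lemma mu_le (J : Finset (Fin 9)) : mu J ≤ 45 := by
  have h : mu J ≤ mu Finset.univ :=
    Finset.sum_le_sum_of_subset (Finset.subset_univ J)
  have h45 : mu (Finset.univ : Finset (Fin 9)) = 45 := by decide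
  omega

lemma mu_lt {I J : Finset (Fin 9)} (h : Dominates I J) (hne : I ≠ J) : mu I < mu J := by
  obtain ⟨f, hf, hle⟩ := h
  by_cases hfix : ∀ i : {x // x ∈ I}, (i : Fin 9) = (f i : Fin 9)
  · have hsub : I ⊆ J := by
      intro x hx
      have h2 := (f ⟨x, hx⟩).2
      rwa [← hfix ⟨x, hx⟩] at h2
    obtain ⟨x, hxJ, hxI⟩ := Finset.exists_of_ssubset (hsub.ssubset_of_ne hne)
    exact Finset.sum_lt_sum_of_subset hsub hxJ hxI (by omega) (fun _ _ _ => by omega)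
  · push_neg at hfix
    obtain ⟨i0, hi0⟩ := hfix
    have hinj : ∀ a ∈ I.attach, ∀ b ∈ I.attach,
        ((f a : Fin 9)) = ((f b : Fin 9)) → a = b := by
      intro a _ b _ hab
      exact hf.injective (Subtype.ext hab)
    calc mu I = ∑ i ∈ I.attach, ((i : Fin 9).val + 1) := by
            rw [Finset.sum_attach I (fun i => i.val + 1)]; rfl
      _ < ∑ i ∈ I.attach, ((f i : Fin 9).val + 1) := by
            apply Finset.sum_lt_sum
            · intro i _
              have := hle i
              simp only [Fin.le_def] at this
              omega
            · refine ⟨i0, Finset.mem_attach _ _, ?_⟩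
              have h1 := hle i0
              have h2 : (i0 : Fin 9) < (f i0 : Fin 9) := lt_of_le_of_ne h1 hi0
              simp only [Fin.lt_def] at h2
              omega
      _ = ∑ j ∈ I.attach.image (fun i => (f i : Fin 9)), (j.val + 1) := by
            rw [Finset.sum_image hinj]
      _ ≤ mu J := by
            apply Finset.sum_le_sum_of_subset
            intro j hj
            obtain ⟨i, _, hij⟩ := Finset.mem_image.mp hj
            exact hij ▸ (f i).2

lemma exists_gcode_dom (α : Fin 9 → ℝ) :
    ∀ (k : ℕ) (J : Finset (Fin 9)), J ∈ Sm (m := 8) α → 45 < mu J + k →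
      ∃ M ∈ Gcode (m := 8) α, Dominates J M := by
  intro k
  induction k with
  | zero => intro J _ hlt; have := mu_le J; omega
  | succ k ih =>
    intro J hJ hlt
    by_cases hJg : J ∈ Gcode (m := 8) α
    · exact ⟨J, hJg, dom_refl J⟩
    · have hex : ∃ K ∈ Sm (m := 8) α, Dominates J K ∧ J ≠ K := by
        simp only [Gcode, Set.mem_setOf_eq] at hJg
        push_neg at hJg
        obtain ⟨K, hK1, hK2, hK3⟩ := hJg hJ
        exact ⟨K, hK1, hK2, hK3⟩
      obtain ⟨K, hK, hdom, hne⟩ := hex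
      have hmu := mu_lt hdom hne
      obtain ⟨M, hM, hd2⟩ := ih K hK (by omega)
      exact ⟨M, hM, dom_trans hdom hd2⟩

/-- There is no generic length vector of 9 positive reals whose genetic code is
`⟨{2,4,6,9}⟩` (here indices are 0-based, so `{2,4,6,9}` becomes `{1,3,5,8}`). -/
theorem stmt14 :
    ¬ ∃ α : Fin 9 → ℝ, (∀ i, 0 < α i) ∧ Monotone α ∧ IsGeneric α ∧
      Gcode (m := 8) α = {({1, 3, 5, 8} : Finset (Fin 9))} := by
  rintro ⟨α, hpos, hmono, hgen, hcode⟩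
  have hX : ({1, 3, 5, 8} : Finset (Fin 9)) ∈ Gcode (m := 8) α := by
    rw [hcode]; rfl
  have hXshort : IsShort α ({1, 3, 5, 8} : Finset (Fin 9)) := hX.1.2
  have key : ∀ J : Finset (Fin 9), Fin.last 8 ∈ J →
      ¬ Dominates J ({1, 3, 5, 8} : Finset (Fin 9)) → ¬ IsShort α J := by
    intro J hJ9 hndom hshort
    obtain ⟨M, hM, hdom⟩ := exists_gcode_dom α 46 J ⟨hJ9, hshort⟩ (by omega)
    rw [hcode] at hM
    exact hndom (hM ▸ hdom)
  have h2 : ¬ IsShort α ({4, 5, 8} : Finset (Fin 9)) := key _ (by decide)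
    (by unfold Dominates; decide)
  have h4 : ¬ IsShort α ({0, 1, 2, 3, 8} : Finset (Fin 9)) := key _ (by decide)
    (fun hd => by have hc := dom_card hd; revert hc; decide)
  unfold IsShort at hXshort h2 h4
  push_neg at h2 h4
  have c1 : (({1, 3, 5, 8} : Finset (Fin 9)))ᶜ = {0, 2, 4, 6, 7} := by decide
  have c2 : (({4, 5, 8} : Finset (Fin 9)))ᶜ = {0, 1, 2, 3, 6, 7} := by decide
  have c3 : (({0, 1, 2, 3, 8} : Finset (Fin 9)))ᶜ = {4, 5, 6, 7} := by decide
  rw [c1] at hXshort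
  rw [c2] at h2
  rw [c3] at h4
  repeat rw [Finset.sum_insert (by decide)] at hXshort
  repeat rw [Finset.sum_insert (by decide)] at h2
  repeat rw [Finset.sum_insert (by decide)] at h4
  simp only [Finset.sum_singleton] at hXshort h2 h4
  have m01 : α 0 ≤ α 1 := hmono (by decide)
  have m23 : α 2 ≤ α 3 := hmono (by decide)
  have m45 : α 4 ≤ α 5 := hmono (by decide)
  linarith
end
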